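/- If G is a strictly m-degenerate finite simple graph and t_1, t_2, …, t_κ are nonnegative integers with t_1 + t_2 + ⋯ + t_κ ≥ m, then G is (t_1, t_2, …, t_κ)-partitionable; that is, V(G) can be partitioned into sets V_1, …, V_κ such that G[V_i] is strictly t_i-degenerate for each i ∈ [κ]. -/

import Mathlib

open SimpleGraph

universe u

/-- `H` is a cover of `G` with `κ` parts: every edge of `H` joins distinct fibres
`X_u`, `X_v` with `uv ∈ E(G)` (in particular each fibre is independent), and the
edges between two fibres form a (possibly empty) matching. -/
def IsCover {V : Type u} (κ : ℕ) (G : SimpleGraph V) (H : SimpleGraph (V × Fin κ)) : Prop :=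
  (∀ (u v : V) (p q : Fin κ), H.Adj (u, p) (v, q) → G.Adj u v) ∧
  (∀ (u v : V) (p q q' : Fin κ), H.Adj (u, p) (v, q) → H.Adj (u, p) (v, q') → q = q')

/-- The subgraph of `Γ` induced on `R` is strictly `f`-degenerate: every nonempty
subgraph with vertices inside `R` has a vertex whose degree there is `< f`. -/
def StrictlyFDegenerateOn {α : Type u} (Γ : SimpleGraph α) (f : α → ℕ) (R : Set α) : Prop :=
  ∀ S : Set α, S ⊆ R → S.Nonempty → ∃ x ∈ S, (S ∩ {y | Γ.Adj x y}).ncard < f x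

/-- `R` is a transversal of a cover with fibres `X_v = {v} × Fin κ`. -/
def IsTransversal {V : Type u} {κ : ℕ} (R : Set (V × Fin κ)) : Prop :=
  ∀ v : V, ∃! p : Fin κ, (v, p) ∈ R

/-- `H` has a strictly `f`-degenerate transversal. -/
def HasSFDTransversal {V : Type u} {κ : ℕ} (H : SimpleGraph (V × Fin κ))
    (f : V × Fin κ → ℕ) : Prop :=
  ∃ R : Set (V × Fin κ), IsTransversal R ∧ StrictlyFDegenerateOn H f R

/-! Colour so that every nonempty vertex set `S` contains a vertex `y` with fewer than `t (P y)`
neighbours of its own colour in `S`; inside one colour class this is the required degeneracy.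
Such a colouring is built by deleting a vertex `x` with fewer than `m` neighbours and colouring the
rest inductively: since `m ≤ ∑ tᵢ`, some colour `i` is used by fewer than `tᵢ` neighbours of `x`,
and `x` takes it. -/

open Finset

variable {α ι : Type*}

namespace SimpleGraph

def monochromatic (G : SimpleGraph α) (P : α → ι) : SimpleGraph α where
  Adj x y := G.Adj x y ∧ P x = P y
  symm := ⟨fun _ _ h => ⟨h.1.symm, h.2.symm⟩⟩
  loopless := ⟨fun x h => G.loopless.irrefl x h.1⟩

@[simp]
theorem monochromatic_adj {G : SimpleGraph α} {P : α → ι} {x y : α} :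
    (G.monochromatic P).Adj x y ↔ G.Adj x y ∧ P x = P y :=
  Iff.rfl

end SimpleGraph

theorem Finset.exists_card_fiber_lt_of_card_lt_sum [Fintype ι] [DecidableEq ι] (N : Finset α)
    (P : α → ι) (c : ι → ℕ) (hN : #N < ∑ i, c i) : ∃ i, #{y ∈ N | P y = i} < c i := by
  rw [card_eq_sum_card_fiberwise (fun y _ => mem_coe.2 (mem_univ (P y)))] at hN
  obtain ⟨i, -, hi⟩ := exists_lt_of_sum_lt hN
  exact ⟨i, hi⟩

namespace StrictlyFDegenerateOn

variable {Γ Γ' : SimpleGraph α} {f f' : α → ℕ} {R R' : Set α}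

theorem mono (h : StrictlyFDegenerateOn Γ f R) (hR : R' ⊆ R) : StrictlyFDegenerateOn Γ f R' :=
  fun S hS => h S (hS.trans hR)

theorem congr (h : StrictlyFDegenerateOn Γ f R) (hΓ : ∀ x ∈ R, ∀ y ∈ R, Γ.Adj x y ↔ Γ'.Adj x y)
    (hf : ∀ x ∈ R, f x = f' x) : StrictlyFDegenerateOn Γ' f' R := by
  intro S hS hSne
  obtain ⟨x, hxS, hx⟩ := h S hS hSne
  have hN : S ∩ {y | Γ'.Adj x y} = S ∩ {y | Γ.Adj x y} := by
    ext y
    simp only [Set.mem_inter_iff, Set.mem_ofPred_eq]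
    exact and_congr_right fun hyS => (hΓ x (hS hxS) y (hS hyS)).symm
  exact ⟨x, hxS, hN ▸ hf x (hS hxS) ▸ hx⟩

theorem insert (h : StrictlyFDegenerateOn Γ f R) (hR : R.Finite) {x : α}
    (hx : (R ∩ {y | Γ.Adj x y}).ncard < f x) : StrictlyFDegenerateOn Γ f (insert x R) := by
  intro S hS hSne
  by_cases hxS : x ∈ S
  · refine ⟨x, hxS, lt_of_le_of_lt (Set.ncard_le_ncard ?_ (hR.inter_of_left _)) hx⟩
    rintro y ⟨hyS, hxy⟩
    exact ⟨(hS hyS).resolve_left (Γ.ne_of_adj hxy).symm, hxy⟩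
  · exact h S (fun y hy => (hS hy).resolve_left (ne_of_mem_of_not_mem hy hxS)) hSne

theorem monochromatic_class {P : α → ι} {t : α → ι → ℕ}
    (h : StrictlyFDegenerateOn (Γ.monochromatic P) (fun x => t x (P x)) R) (i : ι) :
    StrictlyFDegenerateOn Γ (fun x => t x i) (R ∩ {x | P x = i}) :=
  (h.mono Set.inter_subset_left).congr
    (fun x hx y hy => monochromatic_adj.trans <| and_iff_left (hx.2.trans hy.2.symm))
    (fun x hx => by rw [hx.2])

end StrictlyFDegenerateOn

theorem exists_monochromatic_strictlyFDegenerateOn [Fintype ι] [Nonempty ι]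
    {G : SimpleGraph α} {f : α → ℕ} {t : α → ι → ℕ} (hf : ∀ x, f x ≤ ∑ i, t x i)
    (s : Finset α) (hs : StrictlyFDegenerateOn G f s) :
    ∃ P : α → ι, StrictlyFDegenerateOn (G.monochromatic P) (fun x => t x (P x)) s := by
  classical
  induction s using Finset.strongInduction with
  | _ s ih =>
  rcases s.eq_empty_or_nonempty with rfl | hne
  · exact ⟨fun _ => Classical.arbitrary ι, fun S hS ⟨y, hy⟩ => absurd (hS hy) (by simp)⟩
  obtain ⟨x, hxs, hx⟩ := hs s subset_rfl hne
  obtain ⟨P, hP⟩ := ih (s.erase x) (erase_ssubset hxs) (hs.mono (by simp))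
  obtain ⟨i, hi⟩ : ∃ i, #{y ∈ s.erase x | G.Adj x y ∧ P y = i} < t x i := by
    have hN : #{y ∈ s.erase x | G.Adj x y} < ∑ i, t x i := by
      refine lt_of_le_of_lt ?_ (hx.trans_le (hf x))
      rw [← Set.ncard_coe_finset]
      exact Set.ncard_le_ncard (by intro y; simp +contextual) (Set.toFinite _)
    simpa [filter_filter] using exists_card_fiber_lt_of_card_lt_sum _ P _ hN
  refine ⟨Function.update P x i, ?_⟩
  have hagree : ∀ y ∈ s.erase x, Function.update P x i y = P y :=
    fun y hy => Function.update_of_ne (ne_of_mem_erase hy) _ _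
  rw [← insert_erase hxs, coe_insert]
  refine (hP.congr ?_ ?_).insert (s.erase x).finite_toSet ?_
  · intro y hy z hz
    simp [hagree y hy, hagree z hz]
  · intro y hy
    simp [hagree y hy]
  · convert hi using 1
    · rw [← Set.ncard_coe_finset]
      congr 1
      ext y
      simp only [Set.mem_inter_iff, mem_coe, mem_erase, Set.mem_ofPred_eq, coe_filter,
        SimpleGraph.monochromatic_adj, Function.update_self, Function.update_apply]
      grind
    · simp

/-- If `G` is strictly `m`-degenerate and `t₁ + ⋯ + t_κ ≥ m`,
then `G` is `(t₁, …, t_κ)`-partitionable. -/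
theorem partitionable_of_strictlyDegenerate
    {V : Type} [Fintype V] (G : SimpleGraph V) (m : ℕ)
    (hG : StrictlyFDegenerateOn G (fun _ => m) Set.univ) (κ : ℕ)
    (t : Fin κ → ℕ) (ht : m ≤ ∑ i : Fin κ, t i) :
    ∃ P : V → Fin κ, ∀ i : Fin κ,
      StrictlyFDegenerateOn G (fun _ => t i) {v : V | P v = i} := by
  rcases isEmpty_or_nonempty V with hV | ⟨⟨v⟩⟩
  · exact ⟨isEmptyElim, fun _ _ _ ⟨x, _⟩ => isEmptyElim x⟩
  have : Nonempty (Fin κ) := by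
    obtain ⟨x, -, hx⟩ := hG Set.univ subset_rfl ⟨v, trivial⟩
    have hm : 0 < m := (Nat.zero_le _).trans_lt hx
    obtain ⟨i, -, -⟩ := exists_ne_zero_of_sum_ne_zero (hm.trans_le ht).ne'
    exact ⟨i⟩
  obtain ⟨P, hP⟩ := exists_monochromatic_strictlyFDegenerateOn (t := fun _ => t)
    (fun _ => ht) univ (by simpa using hG)
  exact ⟨P, fun i => by simpa using hP.monochromatic_class i⟩
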